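/- Let W be a tame 𝓜-module whose underlying abelian group is finitely generated. Then the 𝓜-action on W is trivial. -/

import Mathlib

/-!
Finite generation turns tameness into a uniform bound: some `N` such that every injection fixing
`0, …, N - 1` acts trivially. The permutations acting trivially form a normal subgroup of
`Equiv.Perm ℕ` that contains a transposition `(c, c + 1)` with `N ≤ c`, hence all transpositions,
since these are all conjugate. Any injection `f` agrees below `N` with a product `σ` of
transpositions, and then `f = σ * (σ⁻¹ * f)` with `σ⁻¹ * f` fixing `0, …, N - 1`.
-/

def InjM : Submonoid (Function.End ℕ) where
  carrier := {f | Function.Injective f}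
  one_mem' := fun _ _ h => h
  mul_mem' := fun hf hg => hf.comp hg

namespace InjM

def ofPerm : Equiv.Perm ℕ →* InjM where
  toFun e := ⟨(e : ℕ → ℕ), e.injective⟩
  map_one' := rfl
  map_mul' _ _ := rfl

@[simp]
lemma ofPerm_apply (e : Equiv.Perm ℕ) (i : ℕ) : (ofPerm e).1 i = e i := rfl

lemma exists_forall_smul_eq {W : Type*} [AddCommGroup W] [DistribMulAction InjM W]
    (tame : ∀ w : W, ∃ n : ℕ, ∀ f : InjM, (∀ i < n, f.1 i = i) → f • w = w)
    (hfg : AddGroup.FG W) :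
    ∃ N : ℕ, ∀ f : InjM, (∀ i < N, f.1 i = i) → ∀ w : W, f • w = w := by
  classical
  choose n hn using tame
  obtain ⟨S, hS⟩ := AddGroup.fg_def.mp hfg
  refine ⟨S.sup n, fun f hf w => ?_⟩
  have hw : w ∈ AddSubgroup.closure (S : Set W) := hS ▸ AddSubgroup.mem_top w
  induction hw using AddSubgroup.closure_induction with
  | mem x hx => exact hn x f fun i hi => hf i (hi.trans_le (Finset.le_sup hx))
  | zero => exact smul_zero f
  | add x y _ _ hx hy => rw [smul_add, hx, hy]
  | neg x _ hx => rw [smul_neg, hx]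

end InjM

lemma Equiv.Perm.exists_mem_forall_lt_eq (H : Subgroup (Equiv.Perm ℕ))
    (hH : ∀ a b, Equiv.swap a b ∈ H) {f : ℕ → ℕ} (hf : Function.Injective f) (n : ℕ) :
    ∃ σ ∈ H, ∀ i < n, σ i = f i := by
  induction n with
  | zero => exact ⟨1, H.one_mem, fun i hi => absurd hi i.not_lt_zero⟩
  | succ n ih =>
    obtain ⟨σ, hσH, hσ⟩ := ih
    set j := σ⁻¹ (f n)
    refine ⟨σ * Equiv.swap n j, H.mul_mem hσH (hH n j), fun i hi => ?_⟩
    rcases Nat.lt_succ_iff_lt_or_eq.mp hi with hi | rfl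
    · have hij : i ≠ j := by
        rintro rfl
        exact hi.ne (hf (by rw [← hσ j hi]; simp [j]))
      rw [Equiv.Perm.mul_apply, Equiv.swap_apply_of_ne_of_ne hi.ne hij, hσ i hi]
    · simp [j]

namespace InjM

variable (α : Type*) [MulAction InjM α]

def trivialPerms : Subgroup (Equiv.Perm ℕ) :=
  ((MulAction.toEndHom : InjM →* Function.End α).comp ofPerm).ker

instance : (trivialPerms α).Normal := MonoidHom.normal_ker _

variable {α}

lemma mem_trivialPerms {σ : Equiv.Perm ℕ} : σ ∈ trivialPerms α ↔ ∀ a : α, ofPerm σ • a = a :=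
  MonoidHom.mem_ker.trans funext_iff

variable {N : ℕ}

lemma swap_mem_trivialPerms (hN : ∀ f : InjM, (∀ i < N, f.1 i = i) → ∀ a : α, f • a = a)
    (a b : ℕ) : Equiv.swap a b ∈ trivialPerms α := by
  rcases eq_or_ne a b with rfl | hab
  · rw [Equiv.swap_self]
    exact Subgroup.one_mem _
  set c := a + b + N + 1
  have hc : Equiv.swap c (c + 1) ∈ trivialPerms α :=
    mem_trivialPerms.mpr <| hN _ fun i hi => by
      rw [ofPerm_apply, Equiv.swap_apply_of_ne_of_ne (by omega) (by omega)]
  set g := Equiv.swap a c * Equiv.swap b (c + 1)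
  have hgc : g c = a := by
    simp [g, Equiv.swap_apply_of_ne_of_ne (show c ≠ b by omega) (show c ≠ c + 1 by omega)]
  have hgd : g (c + 1) = b := by
    simp [g, Equiv.swap_apply_of_ne_of_ne hab.symm (show b ≠ c by omega)]
  rw [← hgc, ← hgd, Equiv.swap_apply_apply]
  exact Subgroup.Normal.conj_mem inferInstance _ hc g

lemma smul_eq_self_of_forall_lt (hN : ∀ f : InjM, (∀ i < N, f.1 i = i) → ∀ a : α, f • a = a)
    (f : InjM) (a : α) : f • a = a := by
  obtain ⟨σ, hσ, hσf⟩ :=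
    Equiv.Perm.exists_mem_forall_lt_eq _ (swap_mem_trivialPerms hN) f.2 N
  have hfix : ∀ i < N, (ofPerm σ⁻¹ * f).1 i = i := fun i hi => by
    change σ⁻¹ (f.1 i) = i
    simp [← hσf i hi]
  calc f • a = ofPerm σ • (ofPerm σ⁻¹ * f) • a := by
        rw [smul_smul, ← mul_assoc, ← map_mul, mul_inv_cancel, map_one, one_mul]
    _ = a := by rw [hN _ hfix, mem_trivialPerms.mp hσ]

end InjM

/-- A tame `𝓜`-module whose underlying abelian group is finitely generated is
a trivial `𝓜`-module. -/
theorem stmt_10 {W : Type*} [AddCommGroup W] [DistribMulAction InjM W]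
    (tame : ∀ w : W, ∃ n : ℕ, ∀ f : InjM, (∀ i < n, f.1 i = i) → f • w = w)
    (hfg : AddGroup.FG W) :
    ∀ (f : InjM) (w : W), f • w = w := by
  obtain ⟨N, hN⟩ := InjM.exists_forall_smul_eq tame hfg
  exact InjM.smul_eq_self_of_forall_lt hN
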